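/- For every z>0: (F'(z)/F(z))·sin(π(z−1/4))·cos(π(z−1/4)) + π > 0. -/
import Mathlib


open Real Set Filter Topology

/-- `F(z) = Γ(z+3/4)/(Γ(z+1/4)·√z)`. -/
noncomputable def F (z : ℝ) : ℝ :=
  Real.Gamma (z + 3/4) / (Real.Gamma (z + 1/4) * Real.sqrt z)

namespace Stmt14Aux

/-- log ∘ Γ -/
noncomputable def f : ℝ → ℝ := Real.log ∘ Real.Gamma

/-- digamma -/
noncomputable def ψ : ℝ → ℝ := deriv f

lemma gamma_diff {x : ℝ} (hx : 0 < x) : DifferentiableAt ℝ Real.Gamma x :=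
  Real.differentiableAt_Gamma fun m ↦
    ne_of_gt (lt_of_le_of_lt (by simp [Nat.cast_nonneg] : -(m:ℝ) ≤ 0) hx)

lemma f_diff {x : ℝ} (hx : 0 < x) : DifferentiableAt ℝ f x :=
  (gamma_diff hx).log (Real.Gamma_pos_of_pos hx).ne'

lemma ψ_eq {x : ℝ} (hx : 0 < x) :
    ψ x = deriv Real.Gamma x / Real.Gamma x := by
  rw [ψ, f, Function.comp_def, deriv.log (gamma_diff hx) (Real.Gamma_pos_of_pos hx).ne']

lemma f_rec {x : ℝ} (hx : 0 < x) : f (x + 1) = f x + Real.log x := by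
  simp only [f, Function.comp_apply, Real.Gamma_add_one hx.ne',
    Real.log_mul hx.ne' (Real.Gamma_pos_of_pos hx).ne', add_comm]

lemma ψ_rec {x : ℝ} (hx : 0 < x) : ψ (x + 1) = ψ x + 1 / x := by
  rw [ψ, ← deriv_comp_add_const, one_div, ← Real.deriv_log,
    ← deriv_add (f_diff hx) (Real.differentiableAt_log hx.ne')]
  apply Filter.EventuallyEq.deriv_eq
  filter_upwards [eventually_gt_nhds hx] using fun y hy => f_rec hy

lemma ψ_mono : MonotoneOn ψ (Ioi 0) :=
  Real.convexOn_log_Gamma.monotoneOn_deriv fun x hx => f_diff hx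

lemma tail_bound {y : ℝ} (hy : 0 < y) :
    ψ (y + 1/2) - ψ y ≤ 1 / y ∧ 0 ≤ ψ (y + 1/2) - ψ y := by
  constructor
  · have h1 : ψ (y + 1/2) ≤ ψ (y + 1) :=
      ψ_mono (by simp only [mem_Ioi]; linarith) (by simp only [mem_Ioi]; linarith) (by linarith)
    rw [ψ_rec hy] at h1
    linarith
  · have h : ψ y ≤ ψ (y + 1/2) :=
      ψ_mono (mem_Ioi.mpr hy) (by simp only [mem_Ioi]; linarith) (by linarith)
    linarith

lemma rec_iter {x : ℝ} (hx : 0 < x) (N : ℕ) :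
    ψ (x + N + 1/2) - ψ (x + N) =
      (ψ (x + 1/2) - ψ x) -
        ∑ n ∈ Finset.range N, (1 / (x + n) - 1 / (x + n + 1/2)) := by
  induction N with
  | zero => simp
  | succ N ih =>
    have h1 : x + (N + 1 : ℕ) + 1/2 = (x + N + 1/2) + 1 := by push_cast; ring
    have h2 : x + ((N + 1 : ℕ) : ℝ) = (x + N) + 1 := by push_cast; ring
    have hp1 : (0:ℝ) < x + N + 1/2 := by positivity
    have hp2 : (0:ℝ) < x + N := by positivity
    rw [h1, h2, ψ_rec hp1, ψ_rec hp2, Finset.sum_range_succ]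
    linarith [ih]

lemma tele_bound {x : ℝ} (hx : 1/4 < x) (N : ℕ) :
    ∑ n ∈ Finset.range N, (1 / (x + n) - 1 / (x + n + 1/2)) ≤
      1 / (2 * (x - 1/4)) - 1 / (2 * (x + N - 1/4)) := by
  induction N with
  | zero => simp
  | succ N ih =>
    rw [Finset.sum_range_succ]
    have hu : (1/4 : ℝ) < x + N := by
      have : (0:ℝ) ≤ N := Nat.cast_nonneg N
      linarith
    set u : ℝ := x + N with hudef
    have h1 : (0:ℝ) < u := by linarith
    have h2 : (0:ℝ) < u + 1/2 := by linarith
    have h3 : (0:ℝ) < u - 1/4 := by linarith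
    have h4 : (0:ℝ) < u + 3/4 := by linarith
    have key : 1 / u - 1 / (u + 1/2) ≤ 1 / (2 * (u - 1/4)) - 1 / (2 * (u + 3/4)) := by
      rw [div_sub_div _ _ h1.ne' h2.ne',
        div_sub_div _ _ (by positivity : (2 * (u - 1/4)) ≠ 0) (by positivity : (2 * (u + 3/4)) ≠ 0),
        div_le_div_iff₀ (by positivity) (by positivity)]
      nlinarith [sq_nonneg u, h1, h3]
    have e1 : x + ((N + 1 : ℕ) : ℝ) - 1/4 = u + 3/4 := by push_cast; ring
    have e2 : x + (N:ℝ) - 1/4 = u - 1/4 := by ring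
    rw [e1]
    rw [e2] at ih
    linarith

lemma psi_diff_le {x : ℝ} (hx : 1/4 < x) :
    ψ (x + 1/2) - ψ x ≤ 1 / (2 * (x - 1/4)) := by
  have hx0 : (0:ℝ) < x := lt_trans (by norm_num) hx
  have key : ∀ N : ℕ, ψ (x + 1/2) - ψ x ≤ 1 / (2 * (x - 1/4)) + 1 / (x + N) := by
    intro N
    have hpN : (0:ℝ) < x + N := by positivity
    have htail := (tail_bound hpN).1
    have hid := rec_iter hx0 N
    have htele := tele_bound hx N
    have hnn : (0:ℝ) ≤ 1 / (2 * (x + N - 1/4)) := by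
      have hN : (0:ℝ) ≤ (N:ℝ) := Nat.cast_nonneg N
      have hd : (0:ℝ) < 2 * (x + N - 1/4) := by linarith
      exact (one_div_pos.mpr hd).le
    linarith
  have t1 : Tendsto (fun N : ℕ => 1 / (x + N)) atTop (𝓝 0) := by
    simp only [one_div]
    exact Tendsto.inv_tendsto_atTop
      (tendsto_atTop_add_const_left _ x tendsto_natCast_atTop_atTop)
  have t2 : Tendsto (fun N : ℕ => 1 / (2 * (x - 1/4)) + 1 / (x + N)) atTop
      (𝓝 (1 / (2 * (x - 1/4)))) := by
    simpa using tendsto_const_nhds.add t1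
  exact ge_of_tendsto' t2 key

lemma psi_bounds {z : ℝ} (hz : 0 < z) :
    0 ≤ ψ (z + 3/4) - ψ (z + 1/4) ∧ ψ (z + 3/4) - ψ (z + 1/4) ≤ 1 / (2 * z) := by
  have h := psi_diff_le (x := z + 1/4) (by linarith)
  have h2 := (tail_bound (y := z + 1/4) (by linarith)).2
  have e : z + 1/4 + 1/2 = z + 3/4 := by ring
  rw [e] at h h2
  have e2 : 2 * (z + 1/4 - 1/4) = 2 * z := by ring
  rw [e2] at h
  exact ⟨h2, h⟩

lemma F_deriv_div {z : ℝ} (hz : 0 < z) :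
    deriv F z / F z = (ψ (z + 3/4) - ψ (z + 1/4)) - 1 / (2 * z) := by
  have hb : (0:ℝ) < z + 3/4 := by linarith
  have ha : (0:ℝ) < z + 1/4 := by linarith
  have hGb := Real.Gamma_pos_of_pos hb
  have hGa := Real.Gamma_pos_of_pos ha
  have hs : (0:ℝ) < Real.sqrt z := Real.sqrt_pos.mpr hz
  have h1 : HasDerivAt (fun z : ℝ => Real.Gamma (z + 3/4)) (deriv Real.Gamma (z + 3/4)) z :=
    ((gamma_diff hb).hasDerivAt).comp_add_const z (3/4)
  have h2 : HasDerivAt (fun z : ℝ => Real.Gamma (z + 1/4)) (deriv Real.Gamma (z + 1/4)) z :=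
    ((gamma_diff ha).hasDerivAt).comp_add_const z (1/4)
  have h3 : HasDerivAt Real.sqrt (1 / (2 * Real.sqrt z)) z := Real.hasDerivAt_sqrt hz.ne'
  have h4 : HasDerivAt (fun z : ℝ => Real.Gamma (z + 1/4) * Real.sqrt z)
      (deriv Real.Gamma (z + 1/4) * Real.sqrt z + Real.Gamma (z + 1/4) * (1 / (2 * Real.sqrt z)))
      z := h2.mul h3
  have h5 : HasDerivAt F
      ((deriv Real.Gamma (z + 3/4) * (Real.Gamma (z + 1/4) * Real.sqrt z) -
        Real.Gamma (z + 3/4) *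
          (deriv Real.Gamma (z + 1/4) * Real.sqrt z +
            Real.Gamma (z + 1/4) * (1 / (2 * Real.sqrt z)))) /
        (Real.Gamma (z + 1/4) * Real.sqrt z) ^ 2) z :=
    h1.div h4 (by positivity)
  rw [h5.deriv, F, ψ_eq hb, ψ_eq ha]
  have hss : Real.sqrt z * Real.sqrt z = z := Real.mul_self_sqrt hz.le
  set Ga := Real.Gamma (z + 1/4) with hGa_def
  set Gb := Real.Gamma (z + 3/4) with hGb_def
  set Da := deriv Real.Gamma (z + 1/4) with hDa_def
  set Db := deriv Real.Gamma (z + 3/4) with hDb_def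
  set s := Real.sqrt z with hs_def
  rw [← hss]
  field_simp
  ring

end Stmt14Aux

open Stmt14Aux in
/-- For every `z > 0`:
`(F'(z)/F(z))·sin(π(z−1/4))·cos(π(z−1/4)) + π > 0`. -/
theorem stmt14 :
    ∀ z : ℝ, 0 < z →
      (deriv F z / F z) * Real.sin (π * (z - 1/4)) * Real.cos (π * (z - 1/4)) + π
        > 0 := by
  intro z hz
  obtain ⟨hA0, hA1⟩ := psi_bounds hz
  have hDeq : deriv F z / F z = (ψ (z + 3/4) - ψ (z + 1/4)) - 1 / (2 * z) := F_deriv_div hz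
  set D := deriv F z / F z with hDdef
  have hD0 : D ≤ 0 := by rw [hDeq]; linarith
  have hD1 : -(1 / (2 * z)) ≤ D := by rw [hDeq]; linarith
  have hsc : Real.sin (π * (z - 1/4)) * Real.cos (π * (z - 1/4)) =
      -Real.cos (2 * π * z) / 2 := by
    have h1 : Real.sin (2 * (π * (z - 1/4))) =
        2 * Real.sin (π * (z - 1/4)) * Real.cos (π * (z - 1/4)) := Real.sin_two_mul _
    have h2 : 2 * (π * (z - 1/4)) = 2 * π * z - π / 2 := by ring
    have h3 : Real.sin (2 * π * z - π / 2) = -Real.cos (2 * π * z) :=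
      Real.sin_sub_pi_div_two _
    rw [h2, h3] at h1
    linarith
  rw [mul_assoc, hsc]
  set c := Real.cos (2 * π * z) with hc_def
  rcases le_or_gt 0 c with hc | hc
  · have h := mul_nonneg (neg_nonneg.mpr hD0) hc
    nlinarith [Real.pi_pos]
  · have hz4 : 1/4 < z := by
      by_contra h
      push_neg at h
      have hmem : 2 * π * z ∈ Icc (-(π / 2)) (π / 2) := by
        constructor
        · have : (0:ℝ) ≤ 2 * π * z := by positivity
          have := Real.pi_pos
          linarith
        · nlinarith [Real.pi_pos]
      exact absurd (Real.cos_nonneg_of_mem_Icc hmem) (not_le.mpr hc)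
    have hc1 : -1 ≤ c := Real.neg_one_le_cos _
    have hp : (0:ℝ) ≤ -c / 2 := by linarith
    have h6 : -(1 / (2 * z)) * (-c / 2) ≤ D * (-c / 2) :=
      mul_le_mul_of_nonneg_right hD1 hp
    have h7 : -(1 / (2 * z)) * (-c / 2) = c / (4 * z) := by ring
    have h9 : -1 ≤ c / (4 * z) := by
      rw [le_div_iff₀ (by linarith : (0:ℝ) < 4 * z)]
      nlinarith
    nlinarith [Real.pi_gt_three]
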